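/- arXiv:2603.05038 — 2 statements merged into one kernel-verified Lean document; each statement's English description precedes it below -/
import Mathlib

section
/- The bracket $\{-,-\}_A$ on $\mathfrak{Lie}(B)$ preserves the Lie subalgebra $\mathfrak{Lie}(b_1, b_2, \ldots)$ generated by $b_1, b_2, \ldots$ (without $b_0$): if $\psi_1, \psi_2 \in \mathfrak{Lie}(b_1, b_2, \ldots)$, then $\{\psi_1, \psi_2\}_A \in \mathfrak{Lie}(b_1, b_2, \ldots)$. -/
noncomputable section

attribute [local instance] LieRing.ofAssociativeRing

/-- The free noncommutative `ℚ`-algebra on generators `b₀, b₁, b₂, …`. -/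
abbrev QB : Type := FreeAlgebra ℚ ℕ

noncomputable def bb (i : ℕ) : QB := FreeAlgebra.ι ℚ i

/-- The free Lie algebra `Lie(b₁, b₂, …)` on the generators of index `≥ 1` (without `b₀`),
inside `ℚ⟨B⟩` with the commutator bracket. -/
noncomputable def LieBpos : LieSubalgebra ℚ QB :=
  LieSubalgebra.lieSpan ℚ QB {x : QB | ∃ i : ℕ, 1 ≤ i ∧ x = bb i}

lemma bb_mem_LieBpos {n : ℕ} (hn : 1 ≤ n) : bb n ∈ LieBpos :=
  LieSubalgebra.subset_lieSpan ⟨n, hn, rfl⟩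

/-- "Lowering" polynomial attached to a generator. -/
noncomputable def PhiGen (n : ℕ) : Polynomial QB :=
  ∑ l ∈ Finset.Icc 1 n, (((-1 : ℚ) ^ (n + l)) * (((n - 1).choose (l - 1) : ℕ) : ℚ)) •
    Polynomial.monomial (n - l) (bb l)

noncomputable def Phi : QB →ₐ[ℚ] Polynomial QB := FreeAlgebra.lift ℚ PhiGen

lemma Phi_bb (n : ℕ) : Phi (bb n) = PhiGen n := FreeAlgebra.lift_ι_apply _ _

noncomputable def toFinsuppLM : Polynomial QB →ₗ[ℚ] (ℕ →₀ QB) where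
  toFun := fun p => p.toFinsupp.coeff
  map_add' := fun p q => by rw [Polynomial.toFinsupp_add]; rfl
  map_smul' := fun c p => by rw [Polynomial.toFinsupp_smul]; rfl

noncomputable def Lmap (i : ℕ) : Polynomial QB →ₗ[ℚ] QB :=
  (Finsupp.lsum ℚ fun s =>
    LinearMap.mulLeft ℚ (bb (i + s)) - LinearMap.mulRight ℚ (bb (i + s))).comp toFinsuppLM

lemma Lmap_monomial (i s : ℕ) (x : QB) :
    Lmap i (Polynomial.monomial s x) = bb (i + s) * x - x * bb (i + s) := by
  simp [Lmap, toFinsuppLM, Polynomial.toFinsupp_monomial, LinearMap.mulLeft_apply,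
    LinearMap.mulRight_apply]

lemma Lmap_mem {i : ℕ} (hi : 1 ≤ i) (p : Polynomial QB)
    (hp : ∀ s, p.coeff s ∈ LieBpos) : Lmap i p ∈ LieBpos := by
  have : Lmap i p = ∑ s ∈ p.support,
      (bb (i + s) * p.coeff s - p.coeff s * bb (i + s)) := by
    simp [Lmap, toFinsuppLM, Finsupp.lsum_apply, Finsupp.sum, LinearMap.mulLeft_apply,
      LinearMap.mulRight_apply]
    rfl
  rw [this]
  refine Submodule.sum_mem LieBpos.toSubmodule ?_
  intro s _
  have h1 : bb (i + s) ∈ LieBpos := bb_mem_LieBpos (le_trans hi (Nat.le_add_right i s))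
  have := LieBpos.lie_mem h1 (hp s)
  rwa [Ring.lie_def] at this

/-- Coefficients of `Phi ψ` stay in `Lie(b₁,…)` for `ψ ∈ Lie(b₁,…)`. -/
lemma coeff_Phi_mem {ψ : QB} (hψ : ψ ∈ LieBpos) (s : ℕ) : (Phi ψ).coeff s ∈ LieBpos := by
  let K : LieSubalgebra ℚ QB :=
    { carrier := {x : QB | ∀ s, (Phi x).coeff s ∈ LieBpos}
      add_mem' := by
        intro a b ha hb t
        rw [map_add, Polynomial.coeff_add]
        exact add_mem (ha t) (hb t)
      zero_mem' := by
        intro t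
        rw [map_zero, Polynomial.coeff_zero]
        exact zero_mem _
      smul_mem' := by
        intro c x hx t
        rw [map_smul, Polynomial.coeff_smul]
        exact Submodule.smul_mem LieBpos.toSubmodule c (hx t)
      lie_mem' := by
        intro x y hx hy t
        rw [Ring.lie_def, map_sub, map_mul, map_mul, Polynomial.coeff_sub,
          Polynomial.coeff_mul, Polynomial.coeff_mul]
        have hswap : ∑ q ∈ Finset.HasAntidiagonal.antidiagonal t, (Phi y).coeff q.1 * (Phi x).coeff q.2
            = ∑ q ∈ Finset.HasAntidiagonal.antidiagonal t, (Phi y).coeff q.2 * (Phi x).coeff q.1 := by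
          exact Finset.Nat.sum_antidiagonal_swap
            (f := fun q => (Phi y).coeff q.2 * (Phi x).coeff q.1)
        rw [hswap, ← Finset.sum_sub_distrib]
        refine Submodule.sum_mem LieBpos.toSubmodule ?_
        intro q _
        have := LieBpos.lie_mem (hx q.1) (hy q.2)
        rwa [Ring.lie_def] at this }
  have hK : LieBpos ≤ K := by
    apply LieSubalgebra.lieSpan_le.mpr
    rintro _ ⟨n, hn, rfl⟩
    intro t
    rw [Phi_bb, PhiGen]
    rw [Polynomial.finset_sum_coeff]
    refine Submodule.sum_mem LieBpos.toSubmodule ?_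
    intro l hl
    rw [Polynomial.coeff_smul, Polynomial.coeff_monomial]
    refine Submodule.smul_mem LieBpos.toSubmodule _ ?_
    split
    · exact bb_mem_LieBpos (Finset.mem_Icc.mp hl).1
    · exact zero_mem _
  exact hK hψ s

/-- The set of `b₀`-free words. -/
def WS : Set QB := {x : QB | ∃ L : List ℕ, (∀ m ∈ L, 1 ≤ m) ∧ x = (L.map bb).prod}

lemma word_mul_word {L L' : List ℕ} :
    (L.map bb).prod * (L'.map bb).prod = ((L ++ L').map bb).prod := by
  rw [List.map_append, List.prod_append]

lemma mem_W_mul {x y : QB} (hx : x ∈ Submodule.span ℚ WS) (hy : y ∈ Submodule.span ℚ WS) :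
    x * y ∈ Submodule.span ℚ WS := by
  induction hx using Submodule.span_induction with
  | mem x hxw =>
    induction hy using Submodule.span_induction with
    | mem y hyw =>
      obtain ⟨L, hL, rfl⟩ := hxw
      obtain ⟨L', hL', rfl⟩ := hyw
      refine Submodule.subset_span ⟨L ++ L', ?_, word_mul_word⟩
      intro m hm
      rcases List.mem_append.mp hm with h | h
      · exact hL m h
      · exact hL' m h
    | zero => rw [mul_zero]; exact zero_mem _
    | add a b _ _ ha hb => rw [mul_add]; exact add_mem ha hb
    | smul c a _ ha => rw [mul_smul_comm]; exact Submodule.smul_mem _ c ha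
  | zero => rw [zero_mul]; exact zero_mem _
  | add a b _ _ ha hb => rw [add_mul]; exact add_mem ha hb
  | smul c a _ ha => rw [smul_mul_assoc]; exact Submodule.smul_mem _ c ha

lemma LieBpos_le_spanWS {x : QB} (hx : x ∈ LieBpos) : x ∈ Submodule.span ℚ WS := by
  let K : LieSubalgebra ℚ QB :=
    { carrier := (Submodule.span ℚ WS : Submodule ℚ QB)
      add_mem' := fun ha hb => add_mem ha hb
      zero_mem' := zero_mem _
      smul_mem' := fun c x hx => Submodule.smul_mem _ c hx
      lie_mem' := by
        intro a b ha hb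
        rw [Ring.lie_def]
        exact sub_mem (mem_W_mul ha hb) (mem_W_mul hb ha) }
  have hK : LieBpos ≤ K := by
    apply LieSubalgebra.lieSpan_le.mpr
    rintro _ ⟨n, hn, rfl⟩
    refine Submodule.subset_span ⟨[n], by simpa using hn, by simp⟩
  exact hK hx

lemma sum_piFinset_succ {M : Type*} [AddCommMonoid M] {d : ℕ} (S : Fin (d + 1) → Finset ℕ)
    (F : (Fin (d + 1) → ℕ) → M) :
    ∑ g ∈ Fintype.piFinset S, F g =
      ∑ a ∈ S 0, ∑ g ∈ Fintype.piFinset (fun j : Fin d => S j.succ), F (Fin.cons a g) := by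
  rw [← Finset.sum_product']
  refine Finset.sum_nbij' (fun g => (g 0, Fin.tail g)) (fun p => Fin.cons p.1 p.2)
    ?_ ?_ ?_ ?_ ?_
  · intro g hg
    rw [Fintype.mem_piFinset] at hg
    refine Finset.mem_product.mpr ⟨hg 0, Fintype.mem_piFinset.mpr fun j => hg j.succ⟩
  · intro p hp
    obtain ⟨h1, h2⟩ := Finset.mem_product.mp hp
    rw [Fintype.mem_piFinset] at h2 ⊢
    intro j
    induction j using Fin.cases with
    | zero => simpa using h1
    | succ j => simpa using h2 j
  · intro g _
    exact Fin.cons_self_tail g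
  · intro p _
    simp
  · intro g _
    rw [Fin.cons_self_tail]

lemma list_prod_sum {R : Type*} [Semiring R] :
    ∀ (d : ℕ) (S : Fin d → Finset ℕ) (f : (j : Fin d) → ℕ → R),
      (List.ofFn fun j => ∑ x ∈ S j, f j x).prod =
        ∑ g ∈ Fintype.piFinset S, (List.ofFn fun j => f j (g j)).prod := by
  intro d
  induction d with
  | zero => intro S f; simp
  | succ d ih =>
    intro S f
    rw [List.ofFn_succ, List.prod_cons, sum_piFinset_succ S
      (fun g => (List.ofFn fun j => f j (g j)).prod)]
    rw [Finset.sum_mul]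
    refine Finset.sum_congr rfl ?_
    intro a _
    rw [ih (fun j => S j.succ) (fun j x => f j.succ x), Finset.mul_sum]
    refine Finset.sum_congr rfl ?_
    intro g _
    rw [List.ofFn_succ, List.prod_cons]
    simp [Fin.cons_zero, Fin.cons_succ]

lemma prod_smul_monomial :
    ∀ (d : ℕ) (c : Fin d → ℚ) (a : Fin d → ℕ) (x : Fin d → QB),
      (List.ofFn fun j => (c j) • Polynomial.monomial (a j) (x j)).prod =
        (∏ j, c j) • Polynomial.monomial (∑ j, a j) ((List.ofFn fun j => x j).prod) := by
  intro d
  induction d with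
  | zero => intro c a x; simp [Polynomial.monomial_zero_one]
  | succ d ih =>
    intro c a x
    rw [List.ofFn_succ, List.prod_cons, ih (fun j => c j.succ) (fun j => a j.succ)
      (fun j => x j.succ)]
    rw [smul_mul_smul_comm, Polynomial.monomial_mul_monomial]
    rw [Fin.prod_univ_succ, Fin.sum_univ_succ, List.ofFn_succ, List.prod_cons]

lemma Phi_word (d : ℕ) (k : Fin d → ℕ) :
    Phi ((List.ofFn fun j => bb (k j)).prod) =
      ∑ l ∈ Fintype.piFinset (fun j : Fin d => Finset.Icc 1 (k j)),
        (((-1 : ℚ) ^ ((∑ j, k j) + (∑ j, l j))) *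
            ∏ j, (((k j - 1).choose (l j - 1) : ℕ) : ℚ)) •
          Polynomial.monomial ((∑ j, k j) - (∑ j, l j))
            ((List.ofFn fun j => bb (l j)).prod) := by
  rw [map_list_prod, List.map_ofFn]
  have hfun : (⇑Phi ∘ fun j => bb (k j))
      = fun j => ∑ x ∈ Finset.Icc 1 (k j),
          (((-1 : ℚ) ^ (k j + x)) * (((k j - 1).choose (x - 1) : ℕ) : ℚ)) •
            Polynomial.monomial (k j - x) (bb x) := by
    funext j
    simp [Function.comp, Phi_bb, PhiGen]
  rw [hfun, list_prod_sum]
  refine Finset.sum_congr rfl ?_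
  intro l hl
  rw [prod_smul_monomial]
  have hle : ∀ j, l j ≤ k j := by
    intro j
    exact (Finset.mem_Icc.mp (Fintype.mem_piFinset.mp hl j)).2
  congr 1
  · rw [Finset.prod_mul_distrib, Finset.prod_pow_eq_pow_sum, Finset.sum_add_distrib]
  · rw [Finset.sum_tsub_distrib]
    intro j _
    exact hle j

/-- The bracket `{ψ₁,ψ₂}_A = ∂_{ψ₁}(ψ₂) - ∂_{ψ₂}(ψ₁) + [ψ₁,ψ₂]` preserves the Lie subalgebra
`Lie(b₁, b₂, …)` (no `b₀`).  Here `∂` is bilinear, `∂_w` is a derivation with `∂_w(b₀) = 0`,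
and on a `b₀`-free word `w = b_{k₁} ⋯ b_{k_d}` (all `k_j ≥ 1`) and a generator `b_i` (`i ≥ 1`),
`∂_w(b_i) = ∑_{l ≤ k} (-1)^(|k|+|l|) C(k-1, l-1) [b_{i+|k|-|l|}, w(l)]`, where `l` runs over
tuples with `1 ≤ l_j ≤ k_j` and `w(l) = b_{l₁} ⋯ b_{l_d}`. -/
theorem stmt_18
    (D : QB →ₗ[ℚ] QB →ₗ[ℚ] QB)
    (hleib : ∀ (w : QB) (a b : QB), D w (a * b) = D w a * b + a * D w b)
    (hb0 : ∀ w : QB, D w (bb 0) = 0)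
    (hform : ∀ (d : ℕ) (k : Fin d → ℕ), (∀ j, 1 ≤ k j) → ∀ i : ℕ, 1 ≤ i →
      D ((List.ofFn fun j => bb (k j)).prod) (bb i) =
        ∑ l ∈ Fintype.piFinset (fun j : Fin d => Finset.Icc 1 (k j)),
          (((-1 : ℚ) ^ ((∑ j, k j) + (∑ j, l j))) *
              ∏ j, (((k j - 1).choose (l j - 1) : ℕ) : ℚ)) •
            (bb (i + (∑ j, k j) - (∑ j, l j)) * (List.ofFn fun j => bb (l j)).prod
              - (List.ofFn fun j => bb (l j)).prod * bb (i + (∑ j, k j) - (∑ j, l j))))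
    (ψ₁ ψ₂ : QB)
    (h1 : ψ₁ ∈ LieBpos) (h2 : ψ₂ ∈ LieBpos) :
    D ψ₁ ψ₂ - D ψ₂ ψ₁ + (ψ₁ * ψ₂ - ψ₂ * ψ₁) ∈ LieBpos := by
  -- Step 1: on words, `D w (bb i)` is computed by `Lmap i (Phi w)`.
  have hword : ∀ (d : ℕ) (k : Fin d → ℕ), (∀ j, 1 ≤ k j) → ∀ i : ℕ, 1 ≤ i →
      D ((List.ofFn fun j => bb (k j)).prod) (bb i)
        = Lmap i (Phi ((List.ofFn fun j => bb (k j)).prod)) := by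
    intro d k hk i hi
    rw [hform d k hk i hi, Phi_word d k, map_sum]
    refine Finset.sum_congr rfl ?_
    intro l hl
    rw [map_smul, Lmap_monomial]
    have hle : (∑ j, l j) ≤ (∑ j, k j) := by
      refine Finset.sum_le_sum ?_
      intro j _
      exact (Finset.mem_Icc.mp (Fintype.mem_piFinset.mp hl j)).2
    have : i + (∑ j, k j) - (∑ j, l j) = i + ((∑ j, k j) - (∑ j, l j)) := by omega
    rw [this]
  -- Step 2: the same identity for any element of the span of words.
  have key : ∀ ψ ∈ Submodule.span ℚ WS, ∀ i : ℕ, 1 ≤ i →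
      D ψ (bb i) = Lmap i (Phi ψ) := by
    intro ψ hψ
    induction hψ using Submodule.span_induction with
    | mem x hx =>
      obtain ⟨L, hL, rfl⟩ := hx
      intro i hi
      have hofn : (L.map bb).prod = (List.ofFn fun j => bb (L.get j)).prod := by
        rw [← List.ofFn_getElem_eq_map L bb]; rfl
      rw [hofn]
      exact hword L.length L.get (fun j => hL (L.get j) (L.get_mem j)) i hi
    | zero => intro i hi; simp
    | add a b _ _ ha hb =>
      intro i hi
      rw [map_add, LinearMap.add_apply, ha i hi, hb i hi, map_add, map_add]
    | smul c a _ ha =>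
      intro i hi
      rw [map_smul, LinearMap.smul_apply, ha i hi, map_smul, map_smul]
  -- Step 3: Claim A: `D ψ (bb i) ∈ LieBpos` for `ψ ∈ LieBpos`, `i ≥ 1`.
  have hA : ∀ ψ ∈ LieBpos, ∀ i : ℕ, 1 ≤ i → D ψ (bb i) ∈ LieBpos := by
    intro ψ hψ i hi
    rw [key ψ (LieBpos_le_spanWS hψ) i hi]
    exact Lmap_mem hi _ (fun s => coeff_Phi_mem hψ s)
  -- Step 4: `D ψ χ ∈ LieBpos` for `ψ, χ ∈ LieBpos`, via derivation property.
  have hD : ∀ χ ∈ LieBpos, ∀ ψ ∈ LieBpos, D ψ χ ∈ LieBpos := by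
    let T : LieSubalgebra ℚ QB :=
      { carrier := {χ : QB | χ ∈ LieBpos ∧ ∀ ψ ∈ LieBpos, D ψ χ ∈ LieBpos}
        add_mem' := by
          rintro a b ⟨ha1, ha2⟩ ⟨hb1, hb2⟩
          refine ⟨add_mem ha1 hb1, ?_⟩
          intro ψ hψ
          rw [map_add]
          exact add_mem (ha2 ψ hψ) (hb2 ψ hψ)
        zero_mem' := by
          refine ⟨zero_mem _, ?_⟩
          intro ψ hψ
          rw [map_zero]
          exact zero_mem _
        smul_mem' := by
          rintro c x ⟨hx1, hx2⟩
          refine ⟨Submodule.smul_mem LieBpos.toSubmodule c hx1, ?_⟩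
          intro ψ hψ
          rw [map_smul]
          exact Submodule.smul_mem LieBpos.toSubmodule c (hx2 ψ hψ)
        lie_mem' := by
          rintro x y ⟨hx1, hx2⟩ ⟨hy1, hy2⟩
          refine ⟨LieBpos.lie_mem hx1 hy1, ?_⟩
          intro ψ hψ
          have : D ψ ⁅x, y⁆ = ⁅D ψ x, y⁆ + ⁅x, D ψ y⁆ := by
            rw [Ring.lie_def, Ring.lie_def, Ring.lie_def, map_sub, hleib, hleib]
            abel
          rw [this]
          exact add_mem (LieBpos.lie_mem (hx2 ψ hψ) hy1) (LieBpos.lie_mem hx1 (hy2 ψ hψ)) }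
    have hT : LieBpos ≤ T := by
      apply LieSubalgebra.lieSpan_le.mpr
      rintro _ ⟨n, hn, rfl⟩
      exact ⟨bb_mem_LieBpos hn, fun ψ hψ => hA ψ hψ n hn⟩
    intro χ hχ ψ hψ
    exact ((hT hχ).2 : ∀ ψ ∈ LieBpos, D ψ χ ∈ LieBpos) ψ hψ
  have hlie : ψ₁ * ψ₂ - ψ₂ * ψ₁ ∈ LieBpos := by
    have := LieBpos.lie_mem h1 h2
    rwa [Ring.lie_def] at this
  exact add_mem (sub_mem (hD ψ₂ h2 ψ₁ h1) (hD ψ₁ h1 ψ₂ h2)) hlie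

end
end

section
/- For even $m \ge 2$, the element $\mathrm{ad}_{x_0}^{m-1}(x_1) \in \mathfrak{Lie}(X)$ does not belong to the stabilizer $\mathfrak{stab}_{\mathfrak{Lie}(X)}(\Delta_Y)$: the map $s^Y_{\mathrm{ad}_{x_0}^{m-1}(x_1)}$ is not a coderivation of $(\mathbb{Q}\langle Y\rangle, \Delta_Y)$. Concretely, $\Delta_Y \circ s^Y_{\mathrm{ad}_{x_0}^{m-1}(x_1)}(y_2) - (s^Y_{\mathrm{ad}_{x_0}^{m-1}(x_1)} \otimes \mathrm{id} + \mathrm{id} \otimes s^Y_{\mathrm{ad}_{x_0}^{m-1}(x_1)}) \circ \Delta_Y(y_2) = -\sum_{k=0}^{m}((-1)^{m-k}+(-1)^k)\binom{m}{k}\, y_{k+1}\otimes y_{m-k+1} \ne 0$. -/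
open TensorProduct

noncomputable section

/-- The free noncommutative `ℚ`-algebra on `x₀, x₁`. -/
abbrev QX : Type := FreeAlgebra ℚ (Fin 2)

noncomputable def x0 : QX := FreeAlgebra.ι ℚ 0
noncomputable def x1 : QX := FreeAlgebra.ι ℚ 1

/-- The free noncommutative `ℚ`-algebra on generators `y 1, y 2, …`. -/
abbrev QYf : Type := FreeAlgebra ℚ ℕ+

noncomputable def y (n : ℕ+) : QYf := FreeAlgebra.ι ℚ n

/-- The embedding `ℚ⟨Y⟩ → ℚ⟨X⟩`, `yₙ ↦ x₀^(n-1) x₁`. -/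
noncomputable def jmap : QYf →ₐ[ℚ] QX :=
  FreeAlgebra.lift ℚ (fun n : ℕ+ => x0 ^ ((n : ℕ) - 1) * x1)

/-- The shuffle coproduct `Δ_Y` on `ℚ⟨Y⟩`. -/
noncomputable def ΔY : QYf →ₐ[ℚ] QYf ⊗[ℚ] QYf :=
  FreeAlgebra.lift ℚ (fun n : ℕ+ => y n ⊗ₜ[ℚ] 1 + 1 ⊗ₜ[ℚ] y n)

/-- The element `ad_{x₀}^(m-1)(x₁)` of `Lie(X)`. -/
noncomputable def adx (m : ℕ) : QX := (fun u : QX => x0 * u - u * x0)^[m - 1] x1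

lemma ad_iter (n : ℕ) : (fun u : QX => x0 * u - u * x0)^[n] x1
    = ∑ k ∈ Finset.range (n + 1),
        ((-1 : ℚ) ^ k * (n.choose k : ℚ)) • (x0 ^ (n - k) * x1 * x0 ^ k) := by
  induction n with
  | zero => simp
  | succ n ih =>
    rw [Function.iterate_succ_apply', ih]
    -- LHS = x0 * S - S * x0
    rw [Finset.mul_sum, Finset.sum_mul]
    -- rewrite each side
    have hL : ∀ k ∈ Finset.range (n+1),
        x0 * (((-1:ℚ)^k * (n.choose k : ℚ)) • (x0 ^ (n-k) * x1 * x0 ^ k))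
        = ((-1:ℚ)^k * (n.choose k : ℚ)) • (x0 ^ (n+1-k) * x1 * x0 ^ k) := by
      intro k hk
      rw [Finset.mem_range] at hk
      rw [mul_smul_comm]
      rw [show n+1-k = (n-k)+1 by omega, pow_succ']
      congr 1
      simp [mul_assoc]
    have hR : ∀ k ∈ Finset.range (n+1),
        (((-1:ℚ)^k * (n.choose k : ℚ)) • (x0 ^ (n-k) * x1 * x0 ^ k)) * x0
        = ((-1:ℚ)^k * (n.choose k : ℚ)) • (x0 ^ (n-k) * x1 * x0 ^ (k+1)) := by
      intro k hk
      rw [smul_mul_assoc]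
      congr 1
      rw [pow_succ, ← mul_assoc]
    rw [Finset.sum_congr rfl hL, Finset.sum_congr rfl hR]
    -- now handle RHS
    have key : ∑ k ∈ Finset.range (n + 2),
        ((-1 : ℚ) ^ k * ((n+1).choose k : ℚ)) • (x0 ^ (n+1-k) * x1 * x0 ^ k)
        = ∑ k ∈ Finset.range (n+1), ((-1:ℚ)^k * (n.choose k : ℚ)) • (x0 ^ (n+1-k) * x1 * x0 ^ k)
          - ∑ k ∈ Finset.range (n+1), ((-1:ℚ)^k * (n.choose k : ℚ)) • (x0 ^ (n-k) * x1 * x0 ^ (k+1)) := by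
      rw [Finset.sum_range_succ' (fun k => ((-1 : ℚ) ^ k * ((n+1).choose k : ℚ)) • (x0 ^ (n+1-k) * x1 * x0 ^ k)) (n+1)]
      have pascal : ∀ k ∈ Finset.range (n+1),
          ((-1 : ℚ) ^ (k+1) * ((n+1).choose (k+1) : ℚ)) • (x0 ^ (n+1-(k+1)) * x1 * x0 ^ (k+1))
          = ((-1:ℚ)^(k+1) * (n.choose k : ℚ)) • (x0 ^ (n-k) * x1 * x0 ^ (k+1))
            + ((-1:ℚ)^(k+1) * (n.choose (k+1) : ℚ)) • (x0 ^ (n-k) * x1 * x0 ^ (k+1)) := by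
        intro k hk
        rw [show n+1-(k+1) = n-k by omega, Nat.choose_succ_succ, Nat.cast_add, mul_add, add_smul]
      rw [Finset.sum_congr rfl pascal, Finset.sum_add_distrib]
      have e2 : ∑ k ∈ Finset.range (n+1), ((-1:ℚ)^(k+1) * (n.choose (k+1) : ℚ)) • (x0 ^ (n-k) * x1 * x0 ^ (k+1))
          = ∑ k ∈ Finset.range (n+1), ((-1:ℚ)^k * (n.choose k : ℚ)) • (x0 ^ (n+1-k) * x1 * x0 ^ k)
            - ((-1:ℚ)^0 * (n.choose 0 : ℚ)) • (x0 ^ (n+1) * x1 * x0 ^ 0) := by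
      -- Σ_{k∈range(n+1)} f(k+1) = Σ_{k∈range(n+2)} f k - f 0, and Σ_{range(n+2)} = Σ_{range(n+1)} since top is 0
        have := Finset.sum_range_succ' (fun k => ((-1:ℚ)^k * (n.choose k : ℚ)) • (x0 ^ (n+1-k) * x1 * x0 ^ k)) (n+1)
        rw [Finset.sum_range_succ (fun k => ((-1:ℚ)^k * (n.choose k : ℚ)) • (x0 ^ (n+1-k) * x1 * x0 ^ k)) (n+1)] at this
        simp only [Nat.choose_succ_self, Nat.cast_zero, mul_zero, zero_smul, add_zero] at this
        have h2 : ∀ k ∈ Finset.range (n+1),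
            ((-1:ℚ)^(k+1) * (n.choose (k+1) : ℚ)) • (x0 ^ (n+1-(k+1)) * x1 * x0 ^ (k+1))
            = ((-1:ℚ)^(k+1) * (n.choose (k+1) : ℚ)) • (x0 ^ (n-k) * x1 * x0 ^ (k+1)) := by
          intro k hk; rw [show n+1-(k+1) = n-k by omega]
        rw [Finset.sum_congr rfl h2] at this
        rw [eq_sub_iff_add_eq, this]
        norm_num
      rw [e2]
      have e1 : ∀ k ∈ Finset.range (n+1),
          ((-1:ℚ)^(k+1) * (n.choose k : ℚ)) • (x0 ^ (n-k) * x1 * x0 ^ (k+1))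
          = -(((-1:ℚ)^k * (n.choose k : ℚ)) • (x0 ^ (n-k) * x1 * x0 ^ (k+1))) := by
        intro k hk
        rw [← neg_smul]; congr 1; ring
      rw [Finset.sum_congr rfl e1, Finset.sum_neg_distrib]
      simp only [pow_zero, Nat.choose_zero_right, Nat.cast_one, mul_one, one_smul, Nat.sub_zero]
      abel
    rw [key]


/-- coefficient -/
noncomputable def cc (m k : ℕ) : ℚ := (-1:ℚ)^k * ((m-1).choose k : ℚ)

noncomputable def G (m k : ℕ) : QYf ⊗[ℚ] QYf := y k.succPNat ⊗ₜ[ℚ] y (m-k).succPNat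

lemma cc_top (m : ℕ) (hm : 1 ≤ m) : cc m m = 0 := by
  unfold cc
  rw [Nat.choose_eq_zero_of_lt (by omega)]
  simp

lemma cc_zero (m : ℕ) : cc m 0 = 1 := by simp [cc]

lemma hcoef (m : ℕ) (hm : 2 ≤ m) : ∀ k ∈ Finset.range (m+1),
    (cc m (m-1-k) - cc m k) + (cc m (k-1) - cc m (m-k))
    = -(((-1:ℚ)^(m-k) + (-1:ℚ)^k) * (m.choose k : ℚ))
      + ((if k = 0 then (1:ℚ) else 0) + (if k = m then (1:ℚ) else 0)) := by
  intro k hk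
  rw [Finset.mem_range] at hk
  have hpm : (-1:ℚ)^m = (-1:ℚ)^(m-1) * (-1) := by
    rw [← pow_succ, show m-1+1 = m by omega]
  by_cases h0 : k = 0
  · subst h0
    rw [if_pos rfl, if_neg (by omega)]
    rw [show (0:ℕ)-1 = 0 from rfl, Nat.sub_zero, Nat.sub_zero, cc_top m (by omega),
      cc_zero, Nat.choose_zero_right]
    unfold cc
    rw [Nat.choose_self]
    push_cast
    rw [hpm]
    ring
  by_cases hmk : k = m
  · rw [if_neg h0, if_pos hmk, hmk]
    rw [show m-1-m = 0 by omega, Nat.sub_self, cc_top m (by omega), cc_zero,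
      Nat.choose_self]
    unfold cc
    rw [Nat.choose_self]
    push_cast
    rw [hpm]
    ring
  -- middle case : 1 ≤ k ≤ m-1
  have h1 : 1 ≤ k := by omega
  have h2 : k ≤ m - 1 := by omega
  rw [if_neg h0, if_neg hmk, add_zero, add_zero]
  unfold cc
  rw [show m-1-k = (m-1)-k from rfl, Nat.choose_symm h2,
      show m-k = (m-1)-(k-1) by omega, Nat.choose_symm (by omega),
      show m.choose k = (m-1).choose (k-1) + (m-1).choose k by
        rw [show m = (m-1)+1 by omega, show k = (k-1)+1 by omega, Nat.choose_succ_succ]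
        congr 2 <;> omega]
  have e1 : (-1:ℚ)^((m-1)-(k-1)) = (-1:ℚ)^(m-1-k) * (-1) := by
    rw [← pow_succ]; congr 1; omega
  have e2 : (-1:ℚ)^k = (-1:ℚ)^(k-1) * (-1) := by
    rw [← pow_succ]; congr 1; omega
  have e3 : (-1:ℚ)^(m-k) = (-1:ℚ)^(m-1-k) * (-1) := by
    rw [← pow_succ]; congr 1; omega
  rw [e1, e2]
  push_cast
  ring

lemma step2 (m : ℕ) (hm : 2 ≤ m) :
    ∑ k ∈ Finset.range m, cc m k •
      (y (m-1-k).succPNat ⊗ₜ[ℚ] y (k+1).succPNat + y (k+1).succPNat ⊗ₜ[ℚ] y (m-1-k).succPNat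
       - y (m-k).succPNat ⊗ₜ[ℚ] y k.succPNat - y k.succPNat ⊗ₜ[ℚ] y (m-k).succPNat)
    = - ∑ k ∈ Finset.range (m+1),
        (((-1:ℚ)^(m-k) + (-1:ℚ)^k) * (m.choose k : ℚ)) • G m k := by
  have expand : ∀ k ∈ Finset.range m, cc m k •
      (y (m-1-k).succPNat ⊗ₜ[ℚ] y (k+1).succPNat + y (k+1).succPNat ⊗ₜ[ℚ] y (m-1-k).succPNat
       - y (m-k).succPNat ⊗ₜ[ℚ] y k.succPNat - y k.succPNat ⊗ₜ[ℚ] y (m-k).succPNat)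
      = cc m k • (y (m-1-k).succPNat ⊗ₜ[ℚ] y (k+1).succPNat)
        + cc m k • (y (k+1).succPNat ⊗ₜ[ℚ] y (m-1-k).succPNat)
        - cc m k • (y (m-k).succPNat ⊗ₜ[ℚ] y k.succPNat)
        - cc m k • (y k.succPNat ⊗ₜ[ℚ] y (m-k).succPNat) := by
    intro k _
    rw [smul_sub, smul_sub, smul_add]
  rw [Finset.sum_congr rfl expand, Finset.sum_sub_distrib, Finset.sum_sub_distrib,
    Finset.sum_add_distrib]
  -- reindex the four sums
  have h1 : ∑ k ∈ Finset.range m, cc m k • (y (m-1-k).succPNat ⊗ₜ[ℚ] y (k+1).succPNat)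
      = ∑ k ∈ Finset.range m, cc m (m-1-k) • G m k := by
    rw [← Finset.sum_range_reflect (fun k => cc m (m-1-k) • G m k) m]
    refine Finset.sum_congr rfl fun k hk => ?_
    rw [Finset.mem_range] at hk
    unfold G
    rw [show m-1-(m-1-k) = k by omega, show m-(m-1-k) = k+1 by omega]
  have h2 : ∑ k ∈ Finset.range m, cc m k • (y (k+1).succPNat ⊗ₜ[ℚ] y (m-1-k).succPNat)
      = ∑ k ∈ Finset.range m, cc m k • G m (k+1) := by
    refine Finset.sum_congr rfl fun k hk => ?_
    rw [Finset.mem_range] at hk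
    unfold G
    rw [show m-(k+1) = m-1-k by omega]
  have h3 : ∑ k ∈ Finset.range m, cc m k • (y (m-k).succPNat ⊗ₜ[ℚ] y k.succPNat)
      = ∑ k ∈ Finset.range m, cc m (m-1-k) • G m (k+1) := by
    rw [← Finset.sum_range_reflect (fun k => cc m (m-1-k) • G m (k+1)) m]
    refine Finset.sum_congr rfl fun k hk => ?_
    rw [Finset.mem_range] at hk
    unfold G
    rw [show m-1-(m-1-k) = k by omega, show m-(m-1-k+1) = k by omega,
      show m-1-k+1 = m-k by omega]
  have h4 : ∑ k ∈ Finset.range m, cc m k • (y k.succPNat ⊗ₜ[ℚ] y (m-k).succPNat)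
      = ∑ k ∈ Finset.range m, cc m k • G m k := rfl
  rw [h1, h2, h3, h4]
  have comb1 : ∑ k ∈ Finset.range m, cc m (m-1-k) • G m k
      - ∑ k ∈ Finset.range m, cc m k • G m k
      = ∑ k ∈ Finset.range (m+1), (cc m (m-1-k) - cc m k) • G m k - G m m := by
    rw [Finset.sum_range_succ, show m-1-m = 0 by omega, cc_zero, cc_top m (by omega),
      sub_zero, one_smul, add_sub_cancel_right, ← Finset.sum_sub_distrib]
    congr 1
    ext k
    exact (sub_smul (cc m (m-1-k)) (cc m k) (G m k)).symm
  have comb2 : ∑ k ∈ Finset.range m, cc m k • G m (k+1)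
      - ∑ k ∈ Finset.range m, cc m (m-1-k) • G m (k+1)
      = ∑ k ∈ Finset.range (m+1), (cc m (k-1) - cc m (m-k)) • G m k - G m 0 := by
    rw [Finset.sum_range_succ' (fun k => (cc m (k-1) - cc m (m-k)) • G m k) m]
    have : ∀ k ∈ Finset.range m, (cc m (k+1-1) - cc m (m-(k+1))) • G m (k+1)
        = cc m k • G m (k+1) - cc m (m-1-k) • G m (k+1) := by
      intro k hk
      rw [Finset.mem_range] at hk
      rw [show k+1-1 = k from rfl, show m-(k+1) = m-1-k by omega]
      exact sub_smul (cc m k) (cc m (m-1-k)) (G m (k+1))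
    rw [Finset.sum_congr rfl this, Finset.sum_sub_distrib]
    rw [show (0:ℕ)-1 = 0 from rfl, Nat.sub_zero, cc_zero, cc_top m (by omega),
      sub_zero, one_smul, add_sub_cancel_right]
  have lhs_eq : ∑ k ∈ Finset.range m, cc m (m-1-k) • G m k
      + ∑ k ∈ Finset.range m, cc m k • G m (k+1)
      - ∑ k ∈ Finset.range m, cc m (m-1-k) • G m (k+1)
      - ∑ k ∈ Finset.range m, cc m k • G m k
      = (∑ k ∈ Finset.range (m+1), (cc m (m-1-k) - cc m k) • G m k - G m m)
        + (∑ k ∈ Finset.range (m+1), (cc m (k-1) - cc m (m-k)) • G m k - G m 0) := by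
    rw [← comb1, ← comb2]
    abel
  rw [lhs_eq, sub_add_sub_comm, ← Finset.sum_add_distrib]
  have hc : ∀ k ∈ Finset.range (m+1),
      (cc m (m-1-k) - cc m k) • G m k + (cc m (k-1) - cc m (m-k)) • G m k
      = (-(((-1:ℚ)^(m-k) + (-1:ℚ)^k) * (m.choose k : ℚ))) • G m k
        + ((if k = 0 then G m k else 0) + (if k = m then G m k else 0)) := by
    intro k hk
    rw [← add_smul, hcoef m hm k hk, add_smul, add_smul, ite_smul, ite_smul,
      one_smul, zero_smul]
  rw [Finset.sum_congr rfl hc, Finset.sum_add_distrib, Finset.sum_add_distrib]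
  rw [Finset.sum_ite_eq' (Finset.range (m+1)) 0 (fun k => G m k),
      Finset.sum_ite_eq' (Finset.range (m+1)) m (fun k => G m k),
      if_pos (by simp), if_pos (by simp [Finset.mem_range])]
  have : ∀ k ∈ Finset.range (m+1),
      (-(((-1:ℚ)^(m-k) + (-1:ℚ)^k) * (m.choose k : ℚ))) • G m k
      = -((((-1:ℚ)^(m-k) + (-1:ℚ)^k) * (m.choose k : ℚ)) • G m k) := by
    intro k _; exact neg_smul (((-1:ℚ)^(m-k) + (-1:ℚ)^k) * (m.choose k : ℚ)) (G m k)
  rw [Finset.sum_congr rfl this, Finset.sum_neg_distrib]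
  abel


lemma ΔY_y (n : ℕ+) : ΔY (y n) = y n ⊗ₜ[ℚ] 1 + 1 ⊗ₜ[ℚ] y n := by
  unfold ΔY y; rw [FreeAlgebra.lift_ι_apply]

lemma ΔY_mul (a b : ℕ+) : ΔY (y a * y b)
    = (y a * y b) ⊗ₜ[ℚ] 1 + y a ⊗ₜ[ℚ] y b + y b ⊗ₜ[ℚ] y a + 1 ⊗ₜ[ℚ] (y a * y b) := by
  rw [map_mul, ΔY_y, ΔY_y]
  rw [add_mul, mul_add, mul_add]
  simp only [Algebra.TensorProduct.tmul_mul_tmul, one_mul, mul_one]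
  abel

lemma step1 (m : ℕ) (hm : 2 ≤ m) (S : QYf)
    (hs : S = y 2 * y (m-1).succPNat + ∑ k ∈ Finset.range m, cc m k •
      (y (m-1-k).succPNat * y (k+1).succPNat - y (m-k).succPNat * y k.succPNat)) :
    ΔY S - (S ⊗ₜ[ℚ] 1 + 1 ⊗ₜ[ℚ] S + y 2 ⊗ₜ[ℚ] y (m-1).succPNat + y (m-1).succPNat ⊗ₜ[ℚ] y 2)
    = ∑ k ∈ Finset.range m, cc m k •
      (y (m-1-k).succPNat ⊗ₜ[ℚ] y (k+1).succPNat + y (k+1).succPNat ⊗ₜ[ℚ] y (m-1-k).succPNat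
       - y (m-k).succPNat ⊗ₜ[ℚ] y k.succPNat - y k.succPNat ⊗ₜ[ℚ] y (m-k).succPNat) := by
  have key : ∀ k ∈ Finset.range m,
      cc m k •
        (y (m-1-k).succPNat ⊗ₜ[ℚ] y (k+1).succPNat + y (k+1).succPNat ⊗ₜ[ℚ] y (m-1-k).succPNat
         - y (m-k).succPNat ⊗ₜ[ℚ] y k.succPNat - y k.succPNat ⊗ₜ[ℚ] y (m-k).succPNat)
      = ΔY (cc m k • (y (m-1-k).succPNat * y (k+1).succPNat - y (m-k).succPNat * y k.succPNat))
        - (cc m k • (y (m-1-k).succPNat * y (k+1).succPNat - y (m-k).succPNat * y k.succPNat)) ⊗ₜ[ℚ] (1:QYf)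
        - (1:QYf) ⊗ₜ[ℚ] (cc m k • (y (m-1-k).succPNat * y (k+1).succPNat - y (m-k).succPNat * y k.succPNat)) := by
    intro k _
    rw [map_smul, ← smul_tmul', tmul_smul]
    rw [show ∀ (a : ℚ) (X Y : QYf ⊗[ℚ] QYf), a • X - a • Y = a • (X - Y) from
      fun a X Y => (smul_sub a X Y).symm,
      show ∀ (a : ℚ) (X Y : QYf ⊗[ℚ] QYf), a • X - a • Y = a • (X - Y) from
      fun a X Y => (smul_sub a X Y).symm]
    congr 1
    rw [map_sub, ΔY_mul, ΔY_mul, sub_tmul, tmul_sub]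
    abel
  rw [Finset.sum_congr rfl key, hs]
  rw [map_add, map_sum, add_tmul, TensorProduct.sum_tmul, tmul_add, TensorProduct.tmul_sum, ΔY_mul]
  rw [Finset.sum_sub_distrib, Finset.sum_sub_distrib]
  abel

lemma jmap_y (a : ℕ) : jmap (y a.succPNat) = x0 ^ a * x1 := by
  unfold jmap y
  rw [FreeAlgebra.lift_ι_apply, Nat.succPNat_coe, Nat.succ_sub_one]

lemma adx_sum (m : ℕ) (hm : 1 ≤ m) :
    adx m = ∑ k ∈ Finset.range m, cc m k • (x0 ^ (m-1-k) * x1 * x0 ^ k) := by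
  unfold adx
  rw [ad_iter (m-1), show m-1+1 = m by omega]
  rfl

noncomputable def fb (b : ℕ+) : QYf →ₐ[ℚ] ℚ :=
  FreeAlgebra.lift ℚ (fun n : ℕ+ => if n = b then (1:ℚ) else 0)

lemma fb_y (b n : ℕ+) : fb b (y n) = if n = b then 1 else 0 := by
  unfold fb y; rw [FreeAlgebra.lift_ι_apply]

noncomputable def Φ (b c : ℕ+) : QYf ⊗[ℚ] QYf →ₗ[ℚ] ℚ :=
  (TensorProduct.lid ℚ ℚ).toLinearMap ∘ₗ
    TensorProduct.map (fb b).toLinearMap (fb c).toLinearMap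

lemma Φ_tmul (b c : ℕ+) (u v : QYf) : Φ b c (u ⊗ₜ[ℚ] v) = fb b u * fb c v := by
  simp [Φ, TensorProduct.lid_tmul, smul_eq_mul]

/-- For even `m ≥ 2`, `ad_{x₀}^(m-1)(x₁)` is not in the stabilizer of `Δ_Y`: the induced map
`s^Y = s^Y_{ad_{x₀}^(m-1)(x₁)}` on `ℚ⟨Y⟩` is not a coderivation; concretely, evaluating at
`y₂` the coderivation defect equals
`-∑_{k=0}^m ((-1)^(m-k) + (-1)^k) C(m,k) y_{k+1} ⊗ y_{m-k+1} ≠ 0`. -/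
theorem stmt_19 (m : ℕ) (hm : 2 ≤ m) (hme : Even m)
    (π : QX →ₗ[ℚ] QYf)
    (hπj : ∀ q : QYf, π (jmap q) = q)
    (hπx0 : ∀ u : QX, π (u * x0) = 0)
    (d : QX →ₗ[ℚ] QX)
    (hleib : ∀ a b : QX, d (a * b) = d a * b + a * d b)
    (hd0 : d x0 = 0)
    (hd1 : d x1 = x1 * adx m - adx m * x1)
    (sY : QYf →ₗ[ℚ] QYf)
    (hsY : ∀ w : QX, π (adx m * w + d w) = sY (π w)) :
    (ΔY (sY (y 2))
        - ((TensorProduct.map sY (LinearMap.id : QYf →ₗ[ℚ] QYf)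
            + TensorProduct.map (LinearMap.id : QYf →ₗ[ℚ] QYf) sY)
            : QYf ⊗[ℚ] QYf →ₗ[ℚ] QYf ⊗[ℚ] QYf) (ΔY (y 2))
      = - ∑ k ∈ Finset.range (m + 1),
          (((-1 : ℚ) ^ (m - k) + (-1 : ℚ) ^ k) * (m.choose k : ℚ)) •
            (y k.succPNat ⊗ₜ[ℚ] y (m - k).succPNat)) ∧
    (ΔY (sY (y 2))
      ≠ ((TensorProduct.map sY (LinearMap.id : QYf →ₗ[ℚ] QYf)
          + TensorProduct.map (LinearMap.id : QYf →ₗ[ℚ] QYf) sY)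
          : QYf ⊗[ℚ] QYf →ₗ[ℚ] QYf ⊗[ℚ] QYf) (ΔY (y 2))) := by
  have hy12 : (1:ℕ).succPNat = (2:ℕ+) := rfl
  have πY : ∀ a : ℕ, π (x0 ^ a * x1) = y a.succPNat := fun a => by
    rw [← jmap_y a, hπj]
  have πW : ∀ a b : ℕ, π (x0 ^ a * x1 * (x0 ^ b * x1)) = y a.succPNat * y b.succPNat := by
    intro a b
    rw [show x0^a*x1*(x0^b*x1) = jmap (y a.succPNat * y b.succPNat) by
      rw [map_mul, jmap_y, jmap_y], hπj]
  have πZ : ∀ (u : QX) (b : ℕ), 1 ≤ b → π (u * x0 ^ b) = 0 := by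
    intro u b hb
    rw [show b = (b-1)+1 by omega, pow_succ, ← mul_assoc, hπx0]
  have hA := adx_sum m (by omega)
  have hd1' : d (1:QX) = 0 := by
    have h := hleib 1 1
    simp only [one_mul, mul_one] at h
    have h2 : d (1:QX) + d 1 = d 1 + 0 := by rw [add_zero]; exact h.symm
    exact (add_left_cancel h2)
  have hπ1 : π 1 = 1 := by
    have := hπj 1; rwa [map_one] at this
  have hπA : π (adx m) = y (m-1).succPNat := by
    rw [hA, map_sum]
    rw [Finset.sum_eq_single_of_mem 0 (Finset.mem_range.mpr (by omega))]
    · rw [map_smul, cc_zero, one_smul, Nat.sub_zero, pow_zero, mul_one, πY]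
    · intro k hk hk0
      rw [map_smul, πZ _ k (by omega), smul_zero]
  have hsY1 : sY 1 = y (m-1).succPNat := by
    have h := hsY 1
    rw [mul_one, hd1', add_zero, hπ1, hπA] at h
    exact h.symm
  have hπy2 : π (x0 * x1) = y 2 := by
    have := πY 1; rwa [pow_one, hy12] at this
  have hT1 : π (adx m * (x0 * x1))
      = ∑ k ∈ Finset.range m, cc m k • (y (m-1-k).succPNat * y (k+1).succPNat) := by
    rw [hA, Finset.sum_mul, map_sum]
    refine Finset.sum_congr rfl fun k hk => ?_
    rw [smul_mul_assoc, map_smul]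
    congr 1
    rw [show x0^(m-1-k) * x1 * x0^k * (x0 * x1) = x0^(m-1-k) * x1 * (x0^(k+1) * x1) by
      simp only [pow_succ, mul_assoc]]
    exact πW _ _
  have hT2 : π (x0 * (x1 * adx m)) = y 2 * y (m-1).succPNat := by
    rw [hA, Finset.mul_sum, Finset.mul_sum, map_sum]
    rw [Finset.sum_eq_single_of_mem 0 (Finset.mem_range.mpr (by omega))]
    · rw [cc_zero, one_smul, Nat.sub_zero, pow_zero, mul_one]
      rw [show x0 * (x1 * (x0^(m-1) * x1)) = x0^1 * x1 * (x0^(m-1) * x1) by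
        simp only [pow_one, mul_assoc]]
      rw [πW, hy12]
    · intro k hk hk0
      rw [mul_smul_comm, mul_smul_comm, map_smul]
      rw [show x0 * (x1 * (x0^(m-1-k) * x1 * x0^k)) = (x0 * (x1 * (x0^(m-1-k) * x1))) * x0^k by
        simp only [mul_assoc], πZ _ k (by omega), smul_zero]
  have hT3 : π (x0 * (adx m * x1))
      = ∑ k ∈ Finset.range m, cc m k • (y (m-k).succPNat * y k.succPNat) := by
    rw [hA, Finset.sum_mul, Finset.mul_sum, map_sum]
    refine Finset.sum_congr rfl fun k hk => ?_
    rw [Finset.mem_range] at hk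
    rw [smul_mul_assoc, mul_smul_comm, map_smul]
    rw [show x0 * (x0^(m-1-k) * x1 * x0^k * x1) = x0^(m-1-k+1) * x1 * (x0^k * x1) by
      simp only [pow_succ', mul_assoc]]
    rw [πW, show m-1-k+1 = m-k by omega]
  have hdx01 : d (x0 * x1) = x0 * (x1 * adx m) - x0 * (adx m * x1) := by
    rw [hleib, hd0, zero_mul, zero_add, hd1, mul_sub]
  have hS : sY (y 2) = y 2 * y (m-1).succPNat + ∑ k ∈ Finset.range m, cc m k •
      (y (m-1-k).succPNat * y (k+1).succPNat - y (m-k).succPNat * y k.succPNat) := by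
    have h := hsY (x0 * x1)
    rw [hπy2] at h
    rw [← h, map_add, hdx01, map_sub, hT1, hT2, hT3]
    have hsplit : ∑ k ∈ Finset.range m, cc m k •
        (y (m-1-k).succPNat * y (k+1).succPNat - y (m-k).succPNat * y k.succPNat)
        = ∑ k ∈ Finset.range m, cc m k • (y (m-1-k).succPNat * y (k+1).succPNat)
          - ∑ k ∈ Finset.range m, cc m k • (y (m-k).succPNat * y k.succPNat) := by
      rw [← Finset.sum_sub_distrib]
      exact Finset.sum_congr rfl fun k _ => smul_sub _ _ _
    rw [hsplit]
    abel
  have hcod : ((TensorProduct.map sY (LinearMap.id : QYf →ₗ[ℚ] QYf)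
          + TensorProduct.map (LinearMap.id : QYf →ₗ[ℚ] QYf) sY)
          : QYf ⊗[ℚ] QYf →ₗ[ℚ] QYf ⊗[ℚ] QYf) (ΔY (y 2))
      = sY (y 2) ⊗ₜ[ℚ] 1 + 1 ⊗ₜ[ℚ] sY (y 2)
        + y 2 ⊗ₜ[ℚ] y (m-1).succPNat + y (m-1).succPNat ⊗ₜ[ℚ] y 2 := by
    rw [ΔY_y 2]
    simp only [LinearMap.add_apply, map_add, TensorProduct.map_tmul, LinearMap.id_coe,
      id_eq, hsY1]
    abel
  have main : ΔY (sY (y 2))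
        - ((TensorProduct.map sY (LinearMap.id : QYf →ₗ[ℚ] QYf)
            + TensorProduct.map (LinearMap.id : QYf →ₗ[ℚ] QYf) sY)
            : QYf ⊗[ℚ] QYf →ₗ[ℚ] QYf ⊗[ℚ] QYf) (ΔY (y 2))
      = - ∑ k ∈ Finset.range (m + 1),
          (((-1 : ℚ) ^ (m - k) + (-1 : ℚ) ^ k) * (m.choose k : ℚ)) •
            (y k.succPNat ⊗ₜ[ℚ] y (m - k).succPNat) := by
    rw [hcod]
    have e1 := step1 m hm (sY (y 2)) hS
    have e2 := step2 m hm
    rw [show ΔY (sY (y 2)) - (sY (y 2) ⊗ₜ[ℚ] 1 + 1 ⊗ₜ[ℚ] sY (y 2)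
        + y 2 ⊗ₜ[ℚ] y (m-1).succPNat + y (m-1).succPNat ⊗ₜ[ℚ] y 2)
      = ΔY (sY (y 2)) - (sY (y 2) ⊗ₜ[ℚ] 1 + 1 ⊗ₜ[ℚ] sY (y 2)
        + y 2 ⊗ₜ[ℚ] y (m-1).succPNat + y (m-1).succPNat ⊗ₜ[ℚ] y 2) from rfl]
    rw [e1, e2]
    rfl
  refine ⟨main, fun hEq => ?_⟩
  have hz : - ∑ k ∈ Finset.range (m + 1),
      (((-1 : ℚ) ^ (m - k) + (-1 : ℚ) ^ k) * (m.choose k : ℚ)) •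
        (y k.succPNat ⊗ₜ[ℚ] y (m - k).succPNat) = 0 := by
    rw [← main, hEq, sub_self]
  have happ := congrArg (Φ 1 m.succPNat) hz
  rw [map_neg, map_sum, map_zero] at happ
  rw [Finset.sum_eq_single_of_mem 0 (Finset.mem_range.mpr (by omega))] at happ
  · rw [map_smul] at happ
    rw [show (0:ℕ).succPNat = (1:ℕ+) from rfl, Nat.sub_zero, Φ_tmul, fb_y, fb_y,
      if_pos rfl, if_pos rfl] at happ
    rw [hme.neg_one_pow] at happ
    norm_num at happ
  · intro k hk hk0
    rw [map_smul, Φ_tmul, fb_y]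
    rw [if_neg (fun h => hk0 (by
      have := congrArg (fun t : ℕ+ => (t:ℕ)) h
      simp [Nat.succPNat_coe] at this
      omega))]
    rw [zero_mul, smul_zero]

end
end
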